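/- arXiv:1901.07663 — 2 statements merged into one kernel-verified Lean document; each statement's English description precedes it below -/
import Mathlib

section
/- The quantity (∑_{m=0}^{s-2} ∏_{j=0}^{m} (s − j)) / (s^s · √s · e^{−s}) tends to √(2π)·(e − 1) as the integer s tends to infinity. -/
/-!
The `m`-th summand is the falling factorial `s! / (s - m - 1)!`, so reversing the order of
summation turns the sum into `s! * (∑_{i < s} 1 / i! - 1)`. Stirling's formula for `s!` and the
convergence of `∑ 1 / i!` to `e` give the limit.
-/

open Filter Finset Nat Topology

theorem prod_range_natCast_sub_eq_descFactorial {R : Type*} [CommRing R] (n k : ℕ) :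
    ∏ j ∈ range k, ((n : R) - j) = n.descFactorial k := by
  rw [← descPochhammer_eval_eq_prod_range, descPochhammer_eval_eq_descFactorial]

theorem sum_range_descFactorial_succ {K : Type*} [Field K] [CharZero K] (n : ℕ) :
    ∑ k ∈ range n, (n.descFactorial (k + 1) : K) = n ! * ∑ i ∈ range n, (i ! : K)⁻¹ := by
  rw [mul_sum, ← sum_range_reflect (fun i => (n ! : K) * (i ! : K)⁻¹)]
  refine sum_congr rfl fun k hk => ?_
  have hkn : k + 1 ≤ n := mem_range.1 hk
  rw [show n - 1 - k = n - (k + 1) by omega,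
    eq_mul_inv_iff_mul_eq₀ (mod_cast factorial_ne_zero _), ← Nat.cast_mul, mul_comm,
    factorial_mul_descFactorial hkn]

theorem sum_range_sub_one_descFactorial_succ {K : Type*} [Field K] [CharZero K] {n : ℕ}
    (hn : 1 ≤ n) :
    ∑ k ∈ range (n - 1), (n.descFactorial (k + 1) : K) =
      n ! * (∑ i ∈ range n, (i ! : K)⁻¹ - 1) := by
  have h := sum_range_descFactorial_succ (K := K) n
  obtain ⟨m, rfl⟩ := Nat.exists_eq_add_of_le' hn
  rw [sum_range_succ, descFactorial_self] at h
  rw [add_tsub_cancel_right, mul_sub, mul_one, ← h, add_sub_cancel_right]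

theorem tendsto_sum_range_inv_factorial :
    Tendsto (fun n => ∑ i ∈ range n, (i ! : ℝ)⁻¹) atTop (𝓝 (Real.exp 1)) := by
  have h := (NormedSpace.expSeries_div_hasSum_exp (1 : ℝ)).tendsto_sum_nat
  simpa [← Real.exp_eq_exp_ℝ] using h

theorem sqrt_two_mul_stirlingSeq (n : ℕ) :
    √2 * Stirling.stirlingSeq n = n ! / (n ^ n * √n * Real.exp (-n)) := by
  rw [Stirling.stirlingSeq, Real.sqrt_mul zero_le_two, div_pow, Real.exp_neg,
    ← Real.exp_one_pow]
  field_simp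

theorem tendsto_factorial_div_stirling :
    Tendsto (fun n : ℕ => (n ! : ℝ) / (n ^ n * √n * Real.exp (-n))) atTop
      (𝓝 √(2 * Real.pi)) := by
  simpa [sqrt_two_mul_stirlingSeq, Real.sqrt_mul zero_le_two] using
    Stirling.tendsto_stirlingSeq_sqrt_pi.const_mul √2

open Filter in
theorem sum_prod_asymptotic :
    Tendsto (fun s : ℕ =>
        ((∑ m ∈ Finset.range (s - 1), ∏ j ∈ Finset.range (m + 1), ((s : ℝ) - j)) /
          ((s : ℝ) ^ (s : ℕ) * Real.sqrt s * Real.exp (-(s : ℝ)))))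
      atTop (nhds (Real.sqrt (2 * Real.pi) * (Real.exp 1 - 1))) := by
  refine (tendsto_factorial_div_stirling.mul
    (tendsto_sum_range_inv_factorial.sub_const 1)).congr' ?_
  filter_upwards [eventually_ge_atTop 1] with s hs
  simp_rw [prod_range_natCast_sub_eq_descFactorial, sum_range_sub_one_descFactorial_succ hs]
  ring
end

section
/- For every integer s ≥ 1, one has s! ≤ Θ(s+1) < (e − 1)·s!. -/
/-!
Dividing the recurrence by `s!` shows that `Θ(s+1) / s! = ∑_{j=1}^{s} 1/j!`, a partial sum of the
series `e - 1 = ∑_{j ≥ 1} 1/j!` with positive terms: its first term gives the lower bound, and the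
omitted tail gives strictness of the upper bound.
-/

/-- The theta splitting function: `Θ(1) = 0` and `Θ(s+1) = 1 + s·Θ(s)` for `s ≥ 1`. -/
def Theta : ℕ → ℕ
  | 0 => 0
  | 1 => 0
  | (s + 2) => 1 + (s + 1) * Theta (s + 1)

open Finset Nat

lemma theta_succ_eq_factorial_mul_sum (s : ℕ) :
    (Theta (s + 1) : ℝ) = s ! * ∑ k ∈ range s, 1 / ((k + 1)! : ℝ) := by
  induction s with
  | zero => simp [Theta]
  | succ n ih =>
    rw [Theta, Nat.cast_add, Nat.cast_one, Nat.cast_mul, ih, sum_range_succ, factorial_succ]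
    have : ((n + 1)! : ℝ) ≠ 0 := by positivity
    push_cast
    field_simp
    ring

lemma one_le_sum_range_one_div_factorial_succ {s : ℕ} (hs : 1 ≤ s) :
    1 ≤ ∑ k ∈ range s, 1 / ((k + 1)! : ℝ) := by
  have hterm := single_le_sum (f := fun k ↦ 1 / ((k + 1)! : ℝ)) (fun _ _ ↦ by positivity)
    (mem_range.mpr hs)
  simpa using hterm

lemma sum_range_one_div_factorial_succ_lt_exp_one_sub_one (n : ℕ) :
    ∑ k ∈ range n, 1 / ((k + 1)! : ℝ) < Real.exp 1 - 1 := by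
  have hexp := Real.sum_le_exp_of_nonneg zero_le_one (n + 2)
  simp only [one_pow] at hexp
  rw [sum_range_succ', sum_range_succ] at hexp
  have htail : 0 < 1 / ((n + 1)! : ℝ) := by positivity
  simp only [factorial_zero, cast_one, div_one] at hexp
  linarith

theorem factorial_le_theta_lt (s : ℕ) (hs : 1 ≤ s) :
    (s.factorial : ℝ) ≤ Theta (s + 1) ∧
      (Theta (s + 1) : ℝ) < (Real.exp 1 - 1) * s.factorial := by
  have hfac : (0 : ℝ) < s ! := by positivity
  rw [theta_succ_eq_factorial_mul_sum, mul_comm _ (s ! : ℝ)]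
  exact ⟨le_mul_of_one_le_right hfac.le (one_le_sum_range_one_div_factorial_succ hs),
    mul_lt_mul_of_pos_left (sum_range_one_div_factorial_succ_lt_exp_one_sub_one s) hfac⟩
end
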